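/- Let Q be a finite nonempty set of states, Σ an alphabet, δ : Q × Σ → Q a deterministic transition function, and c : Q × Σ → {0,1} a colouring of transitions. Suppose that for every state q ∈ Q there exists a finite word u ∈ Σ* such that the run of δ from q over u uses at least one transition of colour 0. Then there exists a single finite word w ∈ Σ* such that for every state q ∈ Q, the run from q over w uses at least one transition of colour 0. -/

import Mathlib

/-!
Add the states one at a time. If `w` already produces a colour-`0` transition from every state
of `S`, let `u` produce one from the state that `w` leads a new state `q` to; then `w ++ u` works
for `q` through `u`, and still works for `S` because extending a word keeps the transitions it
has already used.
-/

/-- The run of `δ` from `q` over `u` uses at least one transition of colour `0`. -/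
def RunUsesZero {Q A : Type*} (δ : Q → A → Q) (c : Q → A → Fin 2)
    (q : Q) (u : List A) : Prop :=
  ∃ u₁ a u₂, u = u₁ ++ a :: u₂ ∧ c (List.foldl δ q u₁) a = 0

namespace RunUsesZero

variable {Q A : Type*} {δ : Q → A → Q} {c : Q → A → Fin 2} {q : Q} {u : List A}

lemma append (h : RunUsesZero δ c q u) (v : List A) : RunUsesZero δ c q (u ++ v) := by
  obtain ⟨u₁, a, u₂, rfl, hc⟩ := h
  exact ⟨u₁, a, u₂ ++ v, by simp, hc⟩

lemma prepend (w : List A) (h : RunUsesZero δ c (w.foldl δ q) u) :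
    RunUsesZero δ c q (w ++ u) := by
  obtain ⟨u₁, a, u₂, rfl, hc⟩ := h
  exact ⟨w ++ u₁, a, u₂, by simp, by rwa [List.foldl_append]⟩

lemma exists_forall_mem_finset (h : ∀ q, ∃ u, RunUsesZero δ c q u) (S : Finset Q) :
    ∃ w, ∀ q ∈ S, RunUsesZero δ c q w := by
  classical
  induction S using Finset.induction with
  | empty => exact ⟨[], by simp⟩
  | @insert q S _ ih =>
    obtain ⟨w, hw⟩ := ih
    obtain ⟨u, hu⟩ := h (w.foldl δ q)
    refine ⟨w ++ u, fun q' hq' => ?_⟩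
    rcases Finset.mem_insert.mp hq' with rfl | hq'S
    · exact hu.prepend w
    · exact (hw q' hq'S).append u

end RunUsesZero

theorem exists_uniform_zero_word {Q A : Type*} [Finite Q]
    (δ : Q → A → Q) (c : Q → A → Fin 2)
    (h : ∀ q, ∃ u, RunUsesZero δ c q u) :
    ∃ w, ∀ q, RunUsesZero δ c q w := by
  have := Fintype.ofFinite Q
  obtain ⟨w, hw⟩ := RunUsesZero.exists_forall_mem_finset h Finset.univ
  exact ⟨w, fun q => hw q (Finset.mem_univ q)⟩
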